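/- Let N be a natural number, and suppose the coefficient functions t ↦ v̂_k(t) ∈ ℂ, |k| ≤ N, are differentiable with v̂_{−k}(t) = conj(v̂_k(t)), so that v_N(x,t) := Σ_{|k|≤N} v̂_k(t) e^{ikx} is real-valued. If v_N satisfies the Fourier–Galerkin approximation of the inviscid Burgers equation, ∂_t v_N(x,t) + ∂_x [P_N(v_N(·,t)²/2)](x) = 0 for all x and all t ≥ 0, then the L² norm is conserved: ‖v_N(·,t)‖_{L²(0,2π)} = ‖v_N(·,0)‖_{L²(0,2π)} for all t ≥ 0. -/

import Mathlib

/-!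
Write `v_N = ∑_{|k| ≤ N} c_k(t) e^{ikx}`. By orthogonality of the exponentials on `[0, 2π]`, the
Galerkin equation is the ODE system `c_k' = -ik (v_N²/2)^_k`, `|k| ≤ N`, and real-valuedness
gives `‖v_N‖²_{L²} = 2π ∑_k c_k c_{-k}`. The time derivative of `∑_k c_k c_{-k}` is a multiple of
the triad sum `∑_{j+l+m=0} m c_j c_l c_m`; this is symmetric in `j, l, m`, so three times it is
`∑_{j+l+m=0} (j+l+m) c_j c_l c_m = 0`.
-/

open MeasureTheory intervalIntegral Complex

/-- The `k`-th Fourier coefficient `ŵ_k = (1/2π)∫_0^{2π} w(y) e^{−iky} dy`. -/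
noncomputable def fourierCoef (w : ℝ → ℂ) (k : ℤ) : ℂ :=
  (1 / (2 * Real.pi)) * ∫ y in (0 : ℝ)..(2 * Real.pi), w y * Complex.exp (-Complex.I * k * y)

/-- The Fourier projection `P_N w(x) = Σ_{|k|≤N} ŵ_k e^{ikx}` onto frequencies `|k| ≤ N`. -/
noncomputable def fourierProj (N : ℕ) (w : ℝ → ℂ) (x : ℝ) : ℂ :=
  ∑ k ∈ Finset.Icc (-(N : ℤ)) (N : ℤ), fourierCoef w k * Complex.exp (Complex.I * k * x)

open Finset ComplexConjugate

noncomputable def trigPoly (K : Finset ℤ) (a : ℤ → ℂ) (x : ℝ) : ℂ :=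
  ∑ k ∈ K, a k * exp (I * k * x)

theorem sum_comp_neg_of_neg_mem {M : Type*} [AddCommMonoid M] {K : Finset ℤ}
    (hK : ∀ k ∈ K, -k ∈ K) (f : ℤ → M) : ∑ k ∈ K, f (-k) = ∑ k ∈ K, f k :=
  sum_nbij' Neg.neg Neg.neg hK hK (fun _ _ => neg_neg _) (fun _ _ => neg_neg _) fun _ _ => rfl

theorem integral_exp_int_mul_I (n : ℤ) :
    ∫ x in (0 : ℝ)..(2 * Real.pi), exp (I * n * x) = if n = 0 then (2 * Real.pi : ℂ) else 0 := by
  split_ifs with hn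
  · simp [hn]
  · have hc : I * n ≠ 0 := mul_ne_zero I_ne_zero (Int.cast_ne_zero.mpr hn)
    have hper : exp (I * n * (2 * Real.pi : ℝ)) = 1 := by
      rw [← exp_int_mul_two_pi_mul_I n]; push_cast; ring_nf
    rw [integral_exp_mul_complex hc, hper]
    simp

section ExpSum

variable {ι : Type*} (s : Finset ι) (a : ι → ℂ) (n : ι → ℤ)

theorem integral_sum_exp :
    ∫ x in (0 : ℝ)..(2 * Real.pi), ∑ p ∈ s, a p * exp (I * n p * x)
      = 2 * Real.pi * ∑ p ∈ s, if n p = 0 then a p else 0 := by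
  rw [intervalIntegral.integral_finsetSum fun p _ =>
    (by fun_prop : Continuous _).intervalIntegrable _ _]
  simp_rw [intervalIntegral.integral_const_mul, integral_exp_int_mul_I, mul_sum]
  refine sum_congr rfl fun p _ => ?_
  split_ifs <;> ring

theorem fourierCoef_sum_exp (j : ℤ) :
    fourierCoef (fun x => ∑ p ∈ s, a p * exp (I * n p * x)) j
      = ∑ p ∈ s, if n p = j then a p else 0 := by
  have hshift : ∀ x : ℝ, (∑ p ∈ s, a p * exp (I * n p * x)) * exp (-I * j * x)
      = ∑ p ∈ s, a p * exp (I * ((n p - j : ℤ) : ℂ) * x) := fun x => by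
    rw [sum_mul]
    refine sum_congr rfl fun p _ => ?_
    rw [mul_assoc, ← exp_add]
    push_cast; ring_nf
  simp only [fourierCoef, hshift, integral_sum_exp, sub_eq_zero]
  field_simp [Real.pi_ne_zero]

end ExpSum

theorem fourierCoef_div_const (w : ℝ → ℂ) (r : ℂ) (k : ℤ) :
    fourierCoef (fun x => w x / r) k = fourierCoef w k / r := by
  simp only [fourierCoef, div_mul_eq_mul_div, intervalIntegral.integral_div]
  ring

theorem integral_eq_two_pi_mul_fourierCoef_zero (w : ℝ → ℂ) :
    ∫ x in (0 : ℝ)..(2 * Real.pi), w x = 2 * Real.pi * fourierCoef w 0 := by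
  simp only [fourierCoef, Int.cast_zero, mul_zero, zero_mul, exp_zero, mul_one]
  field_simp [Real.pi_ne_zero]

section TrigPoly

variable (K : Finset ℤ) (a b : ℤ → ℂ)

theorem fourierCoef_trigPoly (j : ℤ) : fourierCoef (trigPoly K a) j = if j ∈ K then a j else 0 :=
  (fourierCoef_sum_exp K a id j).trans (sum_ite_eq' K j a)

theorem eq_zero_of_trigPoly_eq_zero (h : ∀ x, trigPoly K a x = 0) {k : ℤ} (hk : k ∈ K) :
    a k = 0 := by
  have h0 : fourierCoef (trigPoly K a) k = 0 := by
    simp [fourierCoef, h]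
  rwa [fourierCoef_trigPoly, if_pos hk] at h0

theorem hasDerivAt_trigPoly (x : ℝ) :
    HasDerivAt (trigPoly K a) (trigPoly K (fun k => I * k * a k) x) x := by
  refine HasDerivAt.fun_sum fun k _ => ?_
  have h := ((hasDerivAt_id (x : ℂ)).const_mul (I * k)).cexp.comp_ofReal.const_mul (a k)
  simp only [id, mul_one] at h
  exact h.congr_deriv (by ring)

theorem trigPoly_mul_trigPoly (x : ℝ) :
    trigPoly K a x * trigPoly K b x
      = ∑ p ∈ K ×ˢ K, a p.1 * b p.2 * exp (I * ((p.1 + p.2 : ℤ) : ℂ) * x) := by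
  rw [trigPoly, trigPoly, sum_mul_sum, sum_product]
  refine sum_congr rfl fun j _ => sum_congr rfl fun l _ => ?_
  rw [mul_mul_mul_comm, ← exp_add]
  push_cast; ring_nf

theorem conj_trigPoly (hK : ∀ k ∈ K, -k ∈ K) (ha : ∀ k ∈ K, a (-k) = conj (a k)) (x : ℝ) :
    conj (trigPoly K a x) = trigPoly K a x := by
  rw [trigPoly, map_sum, ← sum_comp_neg_of_neg_mem hK]
  refine sum_congr rfl fun k hk => ?_
  rw [map_mul, ha k hk, conj_conj, ← exp_conj]
  simp

end TrigPoly

theorem sum_triad_eq_zero {R : Type*} [Field R] [CharZero R] (K : Finset ℤ) (a : ℤ → R) :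
    ∑ j ∈ K, ∑ l ∈ K, ∑ m ∈ K, (if j + l + m = 0 then (m : R) * (a j * a l * a m) else 0)
      = 0 := by
  set T : ℤ → ℤ → ℤ → R := fun j l m => if j + l + m = 0 then a j * a l * a m else 0 with hT
  have hT13 : ∀ j l m, T m l j = T j l m := fun j l m => by
    simp only [hT, add_comm, add_left_comm, mul_comm, mul_left_comm]
  have hT23 : ∀ j l m, T j m l = T j l m := fun j l m => by
    simp only [hT, add_comm, add_left_comm, mul_comm, mul_left_comm]
  have h13 : ∑ j ∈ K, ∑ l ∈ K, ∑ m ∈ K, (j : R) * T j l m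
      = ∑ j ∈ K, ∑ l ∈ K, ∑ m ∈ K, (m : R) * T j l m :=
    calc _ = ∑ m ∈ K, ∑ j ∈ K, ∑ l ∈ K, (m : R) * T m l j := sum_congr rfl fun _ _ => sum_comm
      _ = ∑ j ∈ K, ∑ m ∈ K, ∑ l ∈ K, (m : R) * T m l j := sum_comm
      _ = ∑ j ∈ K, ∑ l ∈ K, ∑ m ∈ K, (m : R) * T m l j := sum_congr rfl fun _ _ => sum_comm
      _ = _ := by simp only [hT13]
  have h23 : ∑ j ∈ K, ∑ l ∈ K, ∑ m ∈ K, (l : R) * T j l m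
      = ∑ j ∈ K, ∑ l ∈ K, ∑ m ∈ K, (m : R) * T j l m :=
    calc _ = ∑ j ∈ K, ∑ m ∈ K, ∑ l ∈ K, (l : R) * T j l m := sum_congr rfl fun _ _ => sum_comm
      _ = _ := by simp only [hT23]
  have hsum : ∑ j ∈ K, ∑ l ∈ K, ∑ m ∈ K, ((j + l + m : ℤ) : R) * T j l m = 0 :=
    sum_eq_zero fun j _ => sum_eq_zero fun l _ => sum_eq_zero fun m _ => by
      by_cases h : j + l + m = 0 <;> simp [hT, h]
  have h3 : (3 : R) * ∑ j ∈ K, ∑ l ∈ K, ∑ m ∈ K, (m : R) * T j l m = 0 := by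
    rw [← hsum]
    calc _ = ∑ j ∈ K, ∑ l ∈ K, ∑ m ∈ K, (j : R) * T j l m
          + ∑ j ∈ K, ∑ l ∈ K, ∑ m ∈ K, (l : R) * T j l m
          + ∑ j ∈ K, ∑ l ∈ K, ∑ m ∈ K, (m : R) * T j l m := by rw [h13, h23]; ring
      _ = _ := by simp only [← sum_add_distrib, Int.cast_add, add_mul]
  have hgoal : ∑ j ∈ K, ∑ l ∈ K, ∑ m ∈ K, (m : R) * T j l m = 0 :=
    (mul_eq_zero.mp h3).resolve_left three_ne_zero
  simpa only [hT, mul_ite, mul_zero] using hgoal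

noncomputable def sqCoef (K : Finset ℤ) (a : ℤ → ℂ) (k : ℤ) : ℂ :=
  ∑ j ∈ K, ∑ l ∈ K, if j + l = k then a j * a l else 0

section SqCoef

variable {K : Finset ℤ} (a : ℤ → ℂ)

theorem fourierCoef_trigPoly_sq (k : ℤ) :
    fourierCoef (fun x => trigPoly K a x ^ 2) k = sqCoef K a k := by
  simp only [sq, trigPoly_mul_trigPoly]
  exact (fourierCoef_sum_exp (K ×ˢ K) (fun p => a p.1 * a p.2) (fun p => p.1 + p.2) k).trans
    (sum_product _ _ _)

theorem sqCoef_zero (hK : ∀ k ∈ K, -k ∈ K) : sqCoef K a 0 = ∑ k ∈ K, a k * a (-k) := by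
  refine sum_congr rfl fun j hj => ?_
  simp only [add_eq_zero_iff_eq_neg', sum_ite_eq', hK j hj, if_true]

theorem sum_mul_sqCoef_mul_neg (hK : ∀ k ∈ K, -k ∈ K) :
    ∑ k ∈ K, (k : ℂ) * sqCoef K a k * a (-k) = 0 := by
  rw [← sum_comp_neg_of_neg_mem hK]
  have hterm : ∀ m j l : ℤ, ((-m : ℤ) * (if j + l = -m then a j * a l else 0) : ℂ) * a m
      = -(if j + l + m = 0 then (m : ℂ) * (a j * a l * a m) else 0) := fun m j l => by
    by_cases h : j + l + m = 0
    · rw [if_pos (by omega), if_pos h]; push_cast; ring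
    · rw [if_neg (by omega), if_neg h]; ring
  simp only [sqCoef, neg_neg, mul_sum, sum_mul, hterm, sum_neg_distrib, neg_eq_zero]
  rw [sum_comm]
  exact (sum_congr rfl fun _ _ => sum_comm).trans (sum_triad_eq_zero K a)

end SqCoef

theorem integral_norm_sq_trigPoly {K : Finset ℤ} (hK : ∀ k ∈ K, -k ∈ K) {a : ℤ → ℂ}
    (ha : ∀ k ∈ K, a (-k) = conj (a k)) :
    ((∫ x in (0 : ℝ)..(2 * Real.pi), ‖trigPoly K a x‖ ^ 2 : ℝ) : ℂ)
      = 2 * Real.pi * ∑ k ∈ K, a k * a (-k) := by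
  have hsq : ∀ x, ((‖trigPoly K a x‖ ^ 2 : ℝ) : ℂ) = trigPoly K a x ^ 2 := fun x => by
    rw [ofReal_pow, ← mul_conj', conj_trigPoly K a hK ha, sq]
  rw [← intervalIntegral.integral_ofReal, intervalIntegral.integral_congr fun x _ => hsq x,
    integral_eq_two_pi_mul_fourierCoef_zero, fourierCoef_trigPoly_sq, sqCoef_zero a hK]

theorem hasDerivAt_of_galerkin_burgers {K : Finset ℤ} {c : ℤ → ℝ → ℂ} {t : ℝ}
    (hc : ∀ k ∈ K, DifferentiableAt ℝ (c k) t)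
    (hpde : ∀ x, deriv (fun s => trigPoly K (c · s) x) t
      + deriv (trigPoly K (fourierCoef fun z => trigPoly K (c · t) z ^ 2 / 2)) x = 0)
    {k : ℤ} (hk : k ∈ K) :
    HasDerivAt (c k) (-(I * k) * (sqCoef K (c · t) k / 2)) t := by
  have hdt : ∀ x, HasDerivAt (fun s => trigPoly K (c · s) x)
      (trigPoly K (fun j => deriv (c j) t) x) t := fun x =>
    HasDerivAt.fun_sum fun j hj => (hc j hj).hasDerivAt.mul_const _
  have hflux : fourierCoef (fun z => trigPoly K (c · t) z ^ 2 / 2)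
      = fun j => sqCoef K (c · t) j / 2 := by
    ext j
    rw [fourierCoef_div_const, fourierCoef_trigPoly_sq]
  have hzero : ∀ x,
      trigPoly K (fun j => deriv (c j) t + I * j * (sqCoef K (c · t) j / 2)) x = 0 := fun x => by
    rw [← hpde x, (hdt x).deriv, (hasDerivAt_trigPoly _ _ x).deriv, hflux]
    simp only [trigPoly, add_mul, sum_add_distrib]
  have hk0 := eq_zero_of_trigPoly_eq_zero K _ hzero hk
  exact (hc k hk).hasDerivAt.congr_deriv (by linear_combination hk0)

theorem sum_mul_neg_eq_of_galerkin_burgers {K : Finset ℤ} (hK : ∀ k ∈ K, -k ∈ K)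
    {c : ℤ → ℝ → ℂ}
    (hc : ∀ t, 0 ≤ t → ∀ k ∈ K, HasDerivAt (c k) (-(I * k) * (sqCoef K (c · t) k / 2)) t)
    {t : ℝ} (ht : 0 ≤ t) :
    ∑ k ∈ K, c k t * c (-k) t = ∑ k ∈ K, c k 0 * c (-k) 0 := by
  have hE : ∀ s, 0 ≤ s → HasDerivAt (fun s => ∑ k ∈ K, c k s * c (-k) s) 0 s := by
    intro s hs
    refine (HasDerivAt.fun_sum fun k hk =>
      (hc s hs k hk).mul (hc s hs (-k) (hK k hk))).congr_deriv ?_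
    rw [sum_add_distrib, ← sum_comp_neg_of_neg_mem hK
      (fun k => c k s * (-(I * ↑(-k)) * (sqCoef K (c · s) (-k) / 2))), ← sum_add_distrib,
      ← mul_zero (-I), ← sum_mul_sqCoef_mul_neg (c · s) hK, mul_sum]
    refine sum_congr rfl fun k _ => ?_
    simp only [neg_neg]
    ring
  exact constant_of_has_deriv_right_zero
    (fun s hs => (hE s hs.1).continuousAt.continuousWithinAt)
    (fun s hs => (hE s hs.1).hasDerivWithinAt) t ⟨ht, le_rfl⟩

/-- The Fourier–Galerkin (spectral) method for the inviscid Burgers equation conserves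
the `L²(0,2π)` norm: if `v_N(x,t) = Σ_{|k|≤N} v̂_k(t)e^{ikx}` is real-valued with
differentiable coefficients and satisfies `∂_t v_N + ∂_x P_N(v_N²/2) = 0` for all `x`
and all `t ≥ 0`, then `‖v_N(·,t)‖_{L²(0,2π)} = ‖v_N(·,0)‖_{L²(0,2π)}` for all `t ≥ 0`. -/
theorem fourier_galerkin_burgers_L2_conservation
    (N : ℕ) (c : ℤ → ℝ → ℂ)
    (hdiff : ∀ k : ℤ, Differentiable ℝ (c k))
    (hreal : ∀ (k : ℤ) (t : ℝ), c (-k) t = starRingEnd ℂ (c k t))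
    (vN : ℝ → ℝ → ℂ)
    (hvN : ∀ (x t : ℝ), vN x t = ∑ k ∈ Finset.Icc (-(N : ℤ)) (N : ℤ),
      c k t * Complex.exp (Complex.I * k * x))
    (hpde : ∀ (x : ℝ) (t : ℝ), 0 ≤ t →
      deriv (fun s => vN x s) t +
        deriv (fun y => fourierProj N (fun z => (vN z t) ^ 2 / 2) y) x = 0) :
    ∀ t : ℝ, 0 ≤ t →
      Real.sqrt (∫ x in (0 : ℝ)..(2 * Real.pi), ‖vN x t‖ ^ 2)
        = Real.sqrt (∫ x in (0 : ℝ)..(2 * Real.pi), ‖vN x 0‖ ^ 2) := by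
  intro t ht
  set K := Icc (-(N : ℤ)) N
  have hK : ∀ k ∈ K, -k ∈ K := fun k hk => by
    rw [mem_Icc] at hk ⊢; omega
  obtain rfl : vN = fun x s => trigPoly K (c · s) x := funext₂ hvN
  have hode : ∀ s, 0 ≤ s → ∀ k ∈ K, HasDerivAt (c k) (-(I * k) * (sqCoef K (c · s) k / 2)) s :=
    fun s hs _ hk => hasDerivAt_of_galerkin_burgers (fun k _ => (hdiff k).differentiableAt)
      (fun x => hpde x s hs) hk
  have hL2 : ∀ s, ((∫ x in (0 : ℝ)..(2 * Real.pi), ‖trigPoly K (c · s) x‖ ^ 2 : ℝ) : ℂ)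
      = 2 * Real.pi * ∑ k ∈ K, c k s * c (-k) s :=
    fun s => integral_norm_sq_trigPoly hK fun k _ => hreal k s
  congr 1
  apply ofReal_injective
  rw [hL2, hL2, sum_mul_neg_eq_of_galerkin_burgers hK hode ht]
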